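/- arXiv:0707.3835 — 3 statements merged into one kernel-verified Lean document; each statement's English description precedes it below -/
import Mathlib

section
/- Let p be a prime and let G = C_p × C_p. For every nonzero element x of the group cohomology group H^2(G; ℤ) (with trivial ℤ coefficients), there exists a subgroup H ≤ G of order p such that the restriction of x under the map H^2(G; ℤ) → H^2(H; ℤ) is nonzero. -/
open CategoryTheory groupCohomology

section Restriction

variable {k G H : Type} [CommRing k] [Group G] [Group H]

theorem comp_contractNth (f : H →* G) {n : ℕ} (j : Fin (n + 1)) (g : Fin (n + 1) → H) :
    ⇑f ∘ Fin.contractNth j (· * ·) g = Fin.contractNth j (· * ·) (⇑f ∘ g) := by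
  ext x
  rcases lt_trichotomy (x : ℕ) (j : ℕ) with h | h | h
  · simp only [Function.comp_apply, Fin.contractNth_apply_of_lt _ _ _ _ h]
  · simp only [Function.comp_apply, Fin.contractNth_apply_of_eq _ _ _ _ h, map_mul]
  · simp only [Function.comp_apply, Fin.contractNth_apply_of_gt _ _ _ _ h]

/-- The map of inhomogeneous cochain complexes induced by precomposition with `f`, for
group cohomology with trivial coefficients `M`. -/
noncomputable def resCochains (M : Type) [AddCommGroup M] [Module k M] (f : H →* G) :
    inhomogeneousCochains (Rep.trivial k G M) ⟶ inhomogeneousCochains (Rep.trivial k H M) where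
  f n :=
    ModuleCat.ofHom
    { toFun := fun c (x : Fin n → H) => c (⇑f ∘ x)
      map_add' := fun _ _ => rfl
      map_smul' := fun _ _ => rfl }
  comm' := by
    rintro i j (rfl : i + 1 = j)
    ext c x
    simp [inhomogeneousCochains.d_hom_apply, CochainComplex.of.d, comp_contractNth]
    rfl

/-- The restriction map on group cohomology with trivial coefficients `M`,
induced by a group homomorphism `f : H →* G` (e.g. the inclusion of a subgroup). -/
noncomputable def resMap (M : Type) [AddCommGroup M] [Module k M] (f : H →* G) (n : ℕ) :
    groupCohomology (Rep.trivial k G M) n ⟶ groupCohomology (Rep.trivial k H M) n :=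
  HomologicalComplex.homologyMap (resCochains M f) n

end Restriction

section Bridge

variable {k G H : Type} [CommRing k] [Group G] [Group H]

lemma mem_twoCoboundaries_iff (A : Rep k G) (f : G × G → A) :
    f ∈ coboundaries₂ A ↔ ∃ x : G → A, ∀ g h : G, A.ρ g (x h) - x (g * h) + x g = f (g, h) := by
  constructor
  · rintro ⟨x, rfl⟩
    exact ⟨x, fun g h => by simp [d₁₂_hom_apply]⟩
  · rintro ⟨x, hx⟩
    exact ⟨x, funext fun ⟨g, h⟩ => by simp [d₁₂_hom_apply, hx]⟩

lemma zero_iff (A : Rep k G) (c : groupCohomology.cocycles A 2) :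
    groupCohomology.π A 2 c = 0 ↔
      ((isoCocycles₂ A).hom c : G × G → A) ∈ coboundaries₂ A := by
  rw [← H2π_eq_zero_iff]
  have : H2π A ((isoCocycles₂ A).hom c) = groupCohomology.π A 2 c := by simp [H2π]
  rw [this]

lemma resMap_pi (M : Type) [AddCommGroup M] [Module k M] (f : H →* G)
    (c : groupCohomology.cocycles (Rep.trivial k G M) 2) :
    resMap M f 2 (groupCohomology.π _ 2 c)
      = groupCohomology.π _ 2
          (HomologicalComplex.cyclesMap (resCochains M f) 2 c) := by
  have h : groupCohomology.π (Rep.trivial k G M) 2 ≫ resMap M f 2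
      = HomologicalComplex.cyclesMap (resCochains M f) 2 ≫ groupCohomology.π _ 2 :=
    HomologicalComplex.homologyπ_naturality _ 2
  exact congrArg (fun φ => φ c) h

lemma res_val (M : Type) [AddCommGroup M] [Module k M] (f : H →* G)
    (c : groupCohomology.cocycles (Rep.trivial k G M) 2) (q : H × H) :
    ((isoCocycles₂ (Rep.trivial k H M)).hom
        (HomologicalComplex.cyclesMap (resCochains M f) 2 c)).1 q
      = ((isoCocycles₂ (Rep.trivial k G M)).hom c).1 (f q.1, f q.2) := by
  have hA := isoCocycles₂_hom_comp_i_apply (Rep.trivial k G M) c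
  have hB := isoCocycles₂_hom_comp_i_apply (Rep.trivial k H M)
    (HomologicalComplex.cyclesMap (resCochains M f) 2 c)
  have hcy : iCocycles (Rep.trivial k H M) 2
        ((HomologicalComplex.cyclesMap (resCochains M f) 2) c)
      = (resCochains M f).f 2 (iCocycles (Rep.trivial k G M) 2 c) :=
    congrArg (fun φ => φ c) (HomologicalComplex.cyclesMap_i (resCochains M f) 2)
  have h1 := congrFun hB q
  have h2 := congrFun hA (f q.1, f q.2)
  refine h1.trans (Eq.trans ?_ h2.symm)
  rw [hcy]
  exact congrArg (iCocycles (Rep.trivial k G M) 2 c)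
    (funext fun i => by fin_cases i <;> rfl)

end Bridge

section Arith

variable {Γ : Type} [Group Γ] [Fintype Γ]

/-- `sig c g = ∑ h, c (g, h)`. -/
def sig (c : Γ × Γ → ℤ) (g : Γ) : ℤ := ∑ h : Γ, c (g, h)

lemma sig_rel (c : Γ × Γ → ℤ)
    (hc : ∀ g h j : Γ, c (h, j) - c (g * h, j) + c (g, h * j) - c (g, h) = 0) (g h : Γ) :
    sig c h - sig c (g * h) + sig c g = (Fintype.card Γ : ℤ) * c (g, h) := by
  have h0 : ∑ j : Γ, (c (h, j) - c (g * h, j) + c (g, h * j) - c (g, h)) = 0 :=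
    Finset.sum_eq_zero fun j _ => hc g h j
  have e2 : ∑ j : Γ, c (g, h * j) = sig c g :=
    Equiv.sum_comp (Equiv.mulLeft h) (fun j => c (g, j))
  simp only [Finset.sum_sub_distrib, Finset.sum_add_distrib, Finset.sum_const,
    Finset.card_univ, nsmul_eq_mul, e2] at h0
  have h1 : sig c h - sig c (g * h) + sig c g - (Fintype.card Γ : ℤ) * c (g, h) = 0 := h0
  linarith [h1]

lemma sig_one (c : Γ × Γ → ℤ)
    (hc : ∀ g h j : Γ, c (h, j) - c (g * h, j) + c (g, h * j) - c (g, h) = 0) :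
    sig c 1 = (Fintype.card Γ : ℤ) * c (1, 1) := by
  have : ∀ j : Γ, c (1, j) = c (1, 1) := by
    intro j
    have := hc 1 1 j
    simp only [one_mul] at this
    linarith
  unfold sig
  simp [this]

lemma coboundary_of_dvd (c : Γ × Γ → ℤ)
    (hc : ∀ g h j : Γ, c (h, j) - c (g * h, j) + c (g, h * j) - c (g, h) = 0)
    (hdvd : ∀ g : Γ, (Fintype.card Γ : ℤ) ∣ sig c g) :
    ∃ φ : Γ → ℤ, ∀ g h : Γ, φ h - φ (g * h) + φ g = c (g, h) := by
  choose φ hφ using hdvd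
  have hne : (Fintype.card Γ : ℤ) ≠ 0 := by exact_mod_cast Fintype.card_ne_zero
  refine ⟨φ, fun g h => ?_⟩
  have := sig_rel c hc g h
  rw [hφ, hφ, hφ] at this
  have : (Fintype.card Γ : ℤ) * (φ h - φ (g * h) + φ g) = (Fintype.card Γ : ℤ) * c (g, h) := by
    ring_nf
    ring_nf at this
    linarith
  exact mul_left_cancel₀ hne this

lemma sum_sub_coboundary (φ : Γ → ℤ) (a : Γ) :
    ∑ b : Γ, (φ b - φ (a * b) + φ a) = (Fintype.card Γ : ℤ) * φ a := by
  have e : ∑ b : Γ, φ (a * b) = ∑ b : Γ, φ b :=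
    Equiv.sum_comp (Equiv.mulLeft a) φ
  simp only [Finset.sum_sub_distrib, Finset.sum_add_distrib, Finset.sum_const,
    Finset.card_univ, nsmul_eq_mul, e]
  ring

lemma sig_subgroup (c : Γ × Γ → ℤ)
    (hc : ∀ g h j : Γ, c (h, j) - c (g * h, j) + c (g, h * j) - c (g, h) = 0)
    (K : Subgroup Γ) [Fintype K] (h : K) :
    (Fintype.card K : ℤ) * sig c h = (Fintype.card Γ : ℤ) * ∑ k : K, c (h, k) := by
  have h0 : ∑ k : K, (sig c k - sig c ((h : Γ) * k) + sig c h)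
      = (Fintype.card Γ : ℤ) * ∑ k : K, c (h, k) := by
    rw [Finset.mul_sum]
    exact Finset.sum_congr rfl fun k _ => sig_rel c hc h k
  have e : ∑ k : K, sig c ((h : Γ) * (k : Γ)) = ∑ k : K, sig c k := by
    have := Equiv.sum_comp (Equiv.mulLeft h) (fun k : K => sig c (k : Γ))
    simpa using this
  simp only [Finset.sum_sub_distrib, Finset.sum_add_distrib, Finset.sum_const,
    Finset.card_univ, nsmul_eq_mul, e] at h0
  linarith [h0]

end Arith

/-- Every nonzero element of `H²(C_p × C_p; ℤ)` restricts nontrivially to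
some subgroup of order `p`. -/
theorem stmt_1 (p : ℕ) (hp : p.Prime)
    (x : groupCohomology
      (Rep.trivial ℤ (Multiplicative (ZMod p) × Multiplicative (ZMod p)) ℤ) 2)
    (hx : x ≠ 0) :
    ∃ H : Subgroup (Multiplicative (ZMod p) × Multiplicative (ZMod p)),
      Nat.card H = p ∧ resMap ℤ H.subtype 2 x ≠ 0 := by
  haveI : NeZero p := ⟨hp.pos.ne'⟩
  set Gp := Multiplicative (ZMod p) × Multiplicative (ZMod p) with hGp
  obtain ⟨c, hc⟩ : ∃ c, groupCohomology.π (Rep.trivial ℤ Gp ℤ) 2 c = x :=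
    (ModuleCat.epi_iff_surjective _).1
      (inferInstanceAs (Epi ((inhomogeneousCochains (Rep.trivial ℤ Gp ℤ)).homologyπ 2))) x
  set u : cocycles₂ (Rep.trivial ℤ Gp ℤ) := (isoCocycles₂ _).hom c with hu
  have hco : ∀ g h j : Gp, u.1 (h, j) - u.1 (g * h, j) + u.1 (g, h * j) - u.1 (g, h) = 0 := by
    have h2 := (mem_cocycles₂_def (A := Rep.trivial ℤ Gp ℤ) u.1).1 u.2
    intro g h j
    have h3 := h2 g h j
    simpa [Rep.trivial_ρ_apply, Representation.trivial_apply] using h3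
  have hcard : (Fintype.card Gp : ℤ) = (p : ℤ) ^ 2 := by
    simp [hGp, ZMod.card, sq]
  have hexpm : ∀ a : Multiplicative (ZMod p), a ^ p = 1 := by
    intro a
    have h1 : (a ^ p).toAdd = (1 : Multiplicative (ZMod p)).toAdd := by
      rw [toAdd_pow, toAdd_one, nsmul_eq_mul, ZMod.natCast_self, zero_mul]
    exact Multiplicative.toAdd.injective h1
  have hexp : ∀ g : Gp, g ^ p = 1 := by
    intro g
    rw [Prod.pow_def]
    rw [Prod.ext_iff]
    exact ⟨hexpm g.1, hexpm g.2⟩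
  have key : ¬ ∀ g : Gp, ((p : ℤ)) ^ 2 ∣ sig u.1 g := by
    intro hall
    apply hx
    rw [← hc, zero_iff]
    rw [mem_twoCoboundaries_iff]
    obtain ⟨φ, hφ⟩ := coboundary_of_dvd u.1 hco (fun g => by rw [hcard]; exact hall g)
    exact ⟨φ, fun g h => by simpa [Rep.trivial_ρ_apply, Representation.trivial_apply] using hφ g h⟩
  push_neg at key
  obtain ⟨g₀, hg₀⟩ := key
  have hg₀1 : g₀ ≠ 1 := by
    rintro rfl
    refine hg₀ ?_
    have hone := sig_one u.1 hco
    rw [hone, hcard]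
    exact dvd_mul_right _ _
  have hord : orderOf g₀ = p := by
    have hdvd := orderOf_dvd_of_pow_eq_one (hexp g₀)
    rcases hp.eq_one_or_self_of_dvd _ hdvd with h1 | h1
    · exact absurd (orderOf_eq_one_iff.1 h1) hg₀1
    · exact h1
  set K := Subgroup.zpowers g₀ with hK
  haveI : Fintype K := Fintype.ofFinite K
  have hKcard : (Fintype.card K : ℤ) = (p : ℤ) := by
    rw [← Nat.card_eq_fintype_card, Nat.card_zpowers, hord]
  refine ⟨K, by rw [Nat.card_zpowers, hord], ?_⟩
  intro h0
  rw [← hc, resMap_pi, zero_iff, mem_twoCoboundaries_iff] at h0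
  obtain ⟨φ, hφ⟩ := h0
  have hres : ∀ a b : K, φ b - φ (a * b) + φ a = u.1 ((a : Gp), (b : Gp)) := by
    intro a b
    have h1 := hφ a b
    have h2 := res_val (k := ℤ) ℤ K.subtype c (a, b)
    simp only [Rep.trivial_ρ_apply, Representation.trivial_apply] at h1
    rw [h1]
    exact h2
  let ψ : ↥K → ℤ := φ
  have hres' : ∀ a b : ↥K, ψ b - ψ (a * b) + ψ a = u.1 ((a : Gp), (b : Gp)) := hres
  set g₀' : K := ⟨g₀, Subgroup.mem_zpowers g₀⟩ with hg₀'
  have hs := sig_subgroup u.1 hco K g₀'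
  have hsum := sum_sub_coboundary ψ g₀'
  have e : ∑ k : ↥K, u.1 ((g₀' : Gp), (k : Gp))
      = ∑ b : ↥K, (ψ b - ψ (g₀' * b) + ψ g₀') :=
    Finset.sum_congr rfl fun k _ => (hres' g₀' k).symm
  rw [e, hsum, hKcard, hcard] at hs
  have hs2 : (p : ℤ) * sig u.1 g₀ = (p : ℤ) ^ 2 * ((p : ℤ) * ψ g₀') := hs
  have hpne : ((p : ℤ)) ≠ 0 := by exact_mod_cast hp.pos.ne'
  refine hg₀ ⟨ψ g₀', mul_left_cancel₀ hpne ?_⟩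
  linear_combination hs2
end

section
/- Let p be a prime and let N be a module over the integral group ring ℤ[C_p] of the cyclic group C_p which is finitely generated and free as a ℤ-module. If the reduction M = (ℤ/pℤ) ⊗_ℤ N, regarded as a module over the group algebra 𝔽_p[C_p], is indecomposable, then the dimension of M as an 𝔽_p-vector space is 1, p−1, or p. -/
open TensorProduct Polynomial DirectSum

noncomputable def auxQuotEquiv (K : Type) [Field K] (f : K[X]) :
    (K[X] ⧸ (Submodule.span K[X] {f})) ≃ₗ[K] AdjoinRoot f where
  toFun := fun x => x
  invFun := fun x => x
  map_add' := fun _ _ => rfl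
  map_smul' := by
    intro c x
    obtain ⟨y, rfl⟩ := Submodule.Quotient.mk_surjective _ x
    show (Submodule.Quotient.mk (c • y) : K[X] ⧸ (Submodule.span K[X] {f}))
        = c • AdjoinRoot.mk f y
    rw [AdjoinRoot.smul_mk]
    rfl
  left_inv := fun _ => rfl
  right_inv := fun _ => rfl

lemma aux_finrank_quot (K : Type) [Field K] (f : K[X]) (hf : f ≠ 0) :
    Module.finrank K (K[X] ⧸ (Submodule.span K[X] {f})) = f.natDegree := by
  rw [(auxQuotEquiv K f).finrank_eq, (AdjoinRoot.powerBasis hf).finrank,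
    AdjoinRoot.powerBasis_dim]

lemma aux_isCompl_restrict {F S M : Type*} [Semiring F] [Semiring S] [AddCommMonoid M]
    [Module F M] [Module S M] [SMul F S] [IsScalarTower F S M]
    {P Q : Submodule S M} (h : IsCompl P Q) :
    IsCompl (P.restrictScalars F) (Q.restrictScalars F) := by
  constructor
  · rw [Submodule.disjoint_def]
    intro x hx hy
    exact (Submodule.disjoint_def.mp h.disjoint) x hx hy
  · rw [codisjoint_iff, eq_top_iff]
    intro x _
    obtain ⟨y, z, hy, hz, rfl⟩ := Submodule.codisjoint_iff_exists_add_eq.mp h.codisjoint x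
    exact Submodule.add_mem_sup (by exact hy) (by exact hz)

lemma aux_isCompl_comap {F M D : Type*} [Semiring F] [AddCommMonoid M] [AddCommMonoid D]
    [Module F M] [Module F D] (ψ : M ≃ₗ[F] D) {P Q : Submodule F D} (h : IsCompl P Q) :
    IsCompl (P.comap (ψ : M →ₗ[F] D)) (Q.comap (ψ : M →ₗ[F] D)) := by
  have := (Submodule.orderIsoMapComap ψ.symm).isCompl h
  rwa [Submodule.orderIsoMapComap_apply', Submodule.orderIsoMapComap_apply',
    LinearEquiv.symm_symm] at this

lemma aux_isCompl_ker_range {S : Type*} [Semiring S] {ι : Type*} [DecidableEq ι]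
    (Q : ι → Type*) [∀ i, AddCommGroup (Q i)] [∀ i, Module S (Q i)] (i : ι) :
    IsCompl (LinearMap.ker (DirectSum.component S ι Q i))
      (LinearMap.range (DirectSum.lof S ι Q i)) := by
  constructor
  · rw [Submodule.disjoint_def]
    rintro x hx ⟨y, rfl⟩
    rw [LinearMap.mem_ker, DirectSum.component.lof_self] at hx
    rw [hx, map_zero]
  · rw [codisjoint_iff, eq_top_iff]
    intro x _
    have hx : x = (x - DirectSum.lof S ι Q i (x i)) + DirectSum.lof S ι Q i (x i) := by abel
    rw [hx]
    refine Submodule.add_mem_sup ?_ (LinearMap.mem_range_self _ _)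
    rw [LinearMap.mem_ker, map_sub, DirectSum.component.lof_self]
    change x i - x i = 0
    rw [sub_self]

set_option maxHeartbeats 2000000 in
/-- If `N` is a `ℤ[C_p]`-module (given by a representation of `C_p` on the
finitely generated free `ℤ`-module `N`) whose mod-`p` reduction `M = 𝔽_p ⊗_ℤ N` is an
indecomposable `𝔽_p[C_p]`-module, then `dim_{𝔽_p} M ∈ {1, p - 1, p}`.
Here indecomposability is phrased as: `M` is nonzero and is not the internal direct sum of two
nonzero `𝔽_p`-submodules each stable under the `C_p`-action. -/
theorem stmt_10 (p : ℕ) (hp : p.Prime)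
    (N : Type) [AddCommGroup N] [Module.Free ℤ N] [Module.Finite ℤ N]
    (ρ : Representation ℤ (Multiplicative (ZMod p)) N)
    (hnt : Nontrivial (ZMod p ⊗[ℤ] N))
    (hindec : ∀ U V : Submodule (ZMod p) (ZMod p ⊗[ℤ] N),
      (∀ (g : Multiplicative (ZMod p)) (x : ZMod p ⊗[ℤ] N),
        x ∈ U → LinearMap.baseChange (ZMod p) (ρ g) x ∈ U) →
      (∀ (g : Multiplicative (ZMod p)) (x : ZMod p ⊗[ℤ] N),
        x ∈ V → LinearMap.baseChange (ZMod p) (ρ g) x ∈ V) →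
      IsCompl U V → U = ⊥ ∨ V = ⊥) :
    Module.finrank (ZMod p) (ZMod p ⊗[ℤ] N) = 1 ∨
    Module.finrank (ZMod p) (ZMod p ⊗[ℤ] N) = p - 1 ∨
    Module.finrank (ZMod p) (ZMod p ⊗[ℤ] N) = p := by
  haveI : Fact p.Prime := ⟨hp⟩
  set M : Type := ZMod p ⊗[ℤ] N with hMdef
  let g₀ : Multiplicative (ZMod p) := Multiplicative.ofAdd 1
  set σ : Module.End (ZMod p) M := LinearMap.baseChange (ZMod p) (ρ g₀) with hσdef
  -- every group element acts as a power of σ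
  have hpow : ∀ g : Multiplicative (ZMod p), ∃ n : ℕ,
      LinearMap.baseChange (ZMod p) (ρ g) = σ ^ n := by
    intro g
    refine ⟨(Multiplicative.toAdd g).val, ?_⟩
    rw [hσdef, ← LinearMap.baseChange_pow, ← map_pow]
    congr 2
    symm
    show Multiplicative.ofAdd (1 : ZMod p) ^ (Multiplicative.toAdd g).val = g
    rw [← ofAdd_nsmul, nsmul_eq_mul, mul_one, ZMod.natCast_rightInverse (Multiplicative.toAdd g)]
    rfl
  have hstab : ∀ (U : Submodule (ZMod p) M), (∀ x ∈ U, σ x ∈ U) →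
      ∀ (g : Multiplicative (ZMod p)) (x : M), x ∈ U →
        LinearMap.baseChange (ZMod p) (ρ g) x ∈ U := by
    intro U hU g x hx
    obtain ⟨n, hn⟩ := hpow g
    rw [hn]; clear hn
    induction n with
    | zero => simpa using hx
    | succ k ih =>
      rw [pow_succ']
      exact hU _ ih
  have hg : g₀ ^ p = 1 := by
    show Multiplicative.ofAdd (1 : ZMod p) ^ p = 1
    rw [← ofAdd_nsmul, nsmul_eq_mul, mul_one, ZMod.natCast_self]
    rfl
  have hσp : σ ^ p = 1 := by
    rw [hσdef, ← LinearMap.baseChange_pow, ← map_pow, hg, map_one]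
    exact LinearMap.baseChange_one _ _
  change Module.finrank (ZMod p) M = 1 ∨ Module.finrank (ZMod p) M = p - 1 ∨
    Module.finrank (ZMod p) M = p
  by_cases htriv : ∀ x : M, σ x = x
  · -- trivial action: dimension 1
    left
    have hall : ∀ (g : Multiplicative (ZMod p)) (x : M),
        LinearMap.baseChange (ZMod p) (ρ g) x = x := by
      intro g x
      obtain ⟨n, hn⟩ := hpow g
      rw [hn]; clear hn
      induction n with
      | zero => simp
      | succ k ih =>
        rw [pow_succ', Module.End.mul_apply, ih, htriv x]
    obtain ⟨z, hz⟩ := exists_ne (0 : M)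
    obtain ⟨V, hV⟩ := Submodule.exists_isCompl (Submodule.span (ZMod p) {z})
    rcases hindec (Submodule.span (ZMod p) {z}) V
        (fun g x hx => by rw [hall g x]; exact hx)
        (fun g x hx => by rw [hall g x]; exact hx) hV with h | h
    · exact absurd (h ▸ Submodule.mem_span_singleton_self z) (by simpa using hz)
    · rw [h] at hV
      have htop : Submodule.span (ZMod p) {z} = ⊤ := codisjoint_bot.mp hV.codisjoint
      have := finrank_span_singleton (K := ZMod p) hz
      rw [htop, finrank_top] at this
      exact this
  · push_neg at htriv
    obtain ⟨x₀, hx₀⟩ := htriv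
    -- lower bound p - 1 via ℚ
    have hlow : p - 1 ≤ Module.finrank (ZMod p) M := by
      obtain ⟨y₀, hy₀⟩ : ∃ y : N, ρ g₀ y ≠ y := by
        by_contra h
        push_neg at h
        apply hx₀
        have hρ : ρ g₀ = LinearMap.id := LinearMap.ext h
        rw [hσdef, hρ, LinearMap.baseChange_id]
        rfl
      set τ : Module.End ℚ (ℚ ⊗[ℤ] N) := LinearMap.baseChange ℚ (ρ g₀) with hτdef
      have hτne : τ ≠ 1 := by
        intro h
        apply hy₀
        have h1 : τ ((1:ℚ) ⊗ₜ[ℤ] y₀) = (1:ℚ) ⊗ₜ[ℤ] y₀ := by rw [h]; rfl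
        have h2 : τ ((1:ℚ) ⊗ₜ[ℤ] y₀) = (1:ℚ) ⊗ₜ[ℤ] (ρ g₀ y₀) := by
          rw [hτdef]; exact LinearMap.baseChange_tmul _ _ _
        rw [h2] at h1
        let b := Module.Free.chooseBasis ℤ N
        apply b.ext_elem
        intro i
        have h3 := congrArg (fun w => (b.baseChange ℚ).repr w i) h1
        simp only [Module.Basis.baseChange_repr_tmul, zsmul_eq_mul, mul_one] at h3
        exact_mod_cast h3
      have hτp : τ ^ p = 1 := by
        rw [hτdef, ← LinearMap.baseChange_pow, ← map_pow, hg, map_one]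
        exact LinearMap.baseChange_one _ _
      have hint : IsIntegral ℚ τ := LinearMap.isIntegral τ
      have hdvd : minpoly ℚ τ ∣ (X : ℚ[X]) ^ p - 1 := minpoly.dvd ℚ τ (by
        rw [map_sub, map_one, aeval_X_pow, hτp, sub_self])
      rw [← Polynomial.cyclotomic_prime_mul_X_sub_one ℚ p] at hdvd
      by_cases hcd : cyclotomic p ℚ ∣ minpoly ℚ τ
      · have e1 : (cyclotomic p ℚ).natDegree = p - 1 := by
          rw [natDegree_cyclotomic, Nat.totient_prime hp]
        have e3 := Polynomial.natDegree_le_of_dvd hcd (minpoly.ne_zero hint)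
        have e2 := Polynomial.natDegree_le_of_dvd (LinearMap.minpoly_dvd_charpoly τ)
          (LinearMap.charpoly_monic τ).ne_zero
        have e4 : (LinearMap.charpoly τ).natDegree = Module.finrank ℚ (ℚ ⊗[ℤ] N) :=
          LinearMap.charpoly_natDegree τ
        have e5 : Module.finrank ℚ (ℚ ⊗[ℤ] N) = Module.finrank ℤ N :=
          Module.finrank_baseChange
        have e6 : Module.finrank (ZMod p) M = Module.finrank ℤ N :=
          Module.finrank_baseChange
        omega
      · exfalso
        have hco : IsCoprime (cyclotomic p ℚ) (minpoly ℚ τ) :=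
          (Polynomial.cyclotomic.irreducible_rat hp.pos).coprime_iff_not_dvd.mpr hcd
        have hm1 : minpoly ℚ τ ∣ (X : ℚ[X]) - 1 := hco.symm.dvd_of_dvd_mul_left hdvd
        obtain ⟨c, hc⟩ := hm1
        have haevX : aeval τ ((X : ℚ[X]) - 1) = 0 := by
          rw [hc, map_mul, minpoly.aeval, zero_mul]
        rw [map_sub, aeval_X, map_one, sub_eq_zero] at haevX
        exact hτne haevX
    -- upper bound p via structure theorem over (ZMod p)[X]
    have hup : Module.finrank (ZMod p) M ≤ p := by
      classical
      have haev : Polynomial.aeval σ ((X : (ZMod p)[X]) ^ p - 1) = 0 := by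
        rw [map_sub, map_one, aeval_X_pow, hσp, sub_self]
      have hXpm : ((X : (ZMod p)[X]) ^ p - 1).Monic := by
        have := Polynomial.monic_X_pow_sub_C (1 : ZMod p) hp.ne_zero
        rwa [Polynomial.C_1] at this
      have hXp : ((X : (ZMod p)[X]) ^ p - 1) ≠ 0 := hXpm.ne_zero
      have hXpdeg : ((X : (ZMod p)[X]) ^ p - 1).natDegree = p := by
        have := Polynomial.natDegree_X_pow_sub_C (n := p) (r := (1 : ZMod p))
        rwa [Polynomial.C_1] at this
      have hkillM : ∀ m : Module.AEval' σ, ((X : (ZMod p)[X]) ^ p - 1) • m = 0 := by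
        intro m
        apply (Module.AEval'.of σ).symm.injective
        rw [Module.AEval.of_symm_smul, haev]
        simp
      have htors : Module.IsTorsion (ZMod p)[X] (Module.AEval' σ) := by
        intro m
        exact ⟨⟨(X : (ZMod p)[X]) ^ p - 1, mem_nonZeroDivisors_of_ne_zero hXp⟩, hkillM m⟩
      obtain ⟨ι, hι, q, hq, e, ⟨Φ⟩⟩ := Module.equiv_directSum_of_isTorsion htors
      let Qt : ι → Type := fun i => (ZMod p)[X] ⧸ (Submodule.span (ZMod p)[X] {q i ^ e i})
      let ψ : M ≃ₗ[ZMod p] (⨁ i, Qt i) :=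
        (Module.AEval'.of σ).trans (Φ.restrictScalars (ZMod p))
      have hψσ : ∀ x : M, ψ (σ x) = (X : (ZMod p)[X]) • ψ x := by
        intro x
        show Φ (Module.AEval'.of σ (σ x)) = (X : (ZMod p)[X]) • Φ (Module.AEval'.of σ x)
        rw [← Module.AEval'.X_smul_of, map_smul]
      have hkill : ∀ (i) (y : Qt i), ((X : (ZMod p)[X]) ^ p - 1) • y = 0 := by
        intro i y
        have h1 := hkillM (Φ.symm (DirectSum.lof (ZMod p)[X] ι Qt i y))
        have h2 := congrArg Φ h1
        rw [map_smul, LinearEquiv.apply_symm_apply, map_zero] at h2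
        have h3 := congrArg (DirectSum.component (ZMod p)[X] ι Qt i) h2
        rwa [map_smul, DirectSum.component.lof_self, map_zero] at h3
      have hdvd : ∀ i, q i ^ e i ∣ ((X : (ZMod p)[X]) ^ p - 1) := by
        intro i
        have := hkill i (Submodule.Quotient.mk 1)
        rw [← Submodule.Quotient.mk_smul, smul_eq_mul, mul_one,
          Submodule.Quotient.mk_eq_zero] at this
        obtain ⟨a, ha⟩ := Submodule.mem_span_singleton.mp this
        exact ⟨a, by rw [← ha, smul_eq_mul, mul_comm]⟩
      have hmk1 : ∀ i, e i ≠ 0 → (Submodule.Quotient.mk 1 : Qt i) ≠ 0 := by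
        intro i hi h1
        rw [Submodule.Quotient.mk_eq_zero] at h1
        obtain ⟨a, ha⟩ := Submodule.mem_span_singleton.mp h1
        rw [smul_eq_mul] at ha
        exact (hq i).not_isUnit (((isUnit_pow_iff hi).mp)
          (IsUnit.of_mul_eq_one _ (by rw [mul_comm] at ha; exact ha)))
      have hone : ∀ i j, e i ≠ 0 → e j ≠ 0 → i = j := by
        intro i j hi hj
        by_contra hij
        have hcompl := aux_isCompl_ker_range (S := (ZMod p)[X]) Qt i
        set U := Submodule.comap (ψ : M →ₗ[ZMod p] ⨁ i, Qt i)
          ((LinearMap.ker (DirectSum.component (ZMod p)[X] ι Qt i)).restrictScalars (ZMod p))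
          with hUdef
        set V := Submodule.comap (ψ : M →ₗ[ZMod p] ⨁ i, Qt i)
          ((LinearMap.range (DirectSum.lof (ZMod p)[X] ι Qt i)).restrictScalars (ZMod p))
          with hVdef
        have hUV : IsCompl U V := aux_isCompl_comap ψ (aux_isCompl_restrict hcompl)
        have hUinv : ∀ x ∈ U, σ x ∈ U := by
          intro x hx
          rw [hUdef, Submodule.mem_comap, Submodule.restrictScalars_mem] at hx ⊢
          rw [LinearEquiv.coe_coe] at hx ⊢
          rw [hψσ]
          exact Submodule.smul_mem _ _ hx
        have hVinv : ∀ x ∈ V, σ x ∈ V := by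
          intro x hx
          rw [hVdef, Submodule.mem_comap, Submodule.restrictScalars_mem] at hx ⊢
          rw [LinearEquiv.coe_coe] at hx ⊢
          rw [hψσ]
          exact Submodule.smul_mem _ _ hx
        rcases hindec U V (hstab U hUinv) (hstab V hVinv) hUV with h | h
        · have hzj := hmk1 j hj
          have hmem : ψ.symm (DirectSum.lof (ZMod p)[X] ι Qt j
              (Submodule.Quotient.mk 1)) ∈ U := by
            rw [hUdef]
            simp only [Submodule.mem_comap, LinearEquiv.coe_coe, LinearEquiv.apply_symm_apply,
              Submodule.restrictScalars_mem, LinearMap.mem_ker]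
            rw [DirectSum.component.of, dif_neg (fun hji : j = i => hij hji.symm)]
          rw [h, Submodule.mem_bot] at hmem
          apply hzj
          have := congrArg ψ (congrArg (fun w => w) hmem)
          rw [LinearEquiv.apply_symm_apply, map_zero] at this
          have := congrArg (DirectSum.component (ZMod p)[X] ι Qt j) this
          rwa [DirectSum.component.lof_self, map_zero] at this
        · have hzi := hmk1 i hi
          have hmem : ψ.symm (DirectSum.lof (ZMod p)[X] ι Qt i
              (Submodule.Quotient.mk 1)) ∈ V := by
            rw [hVdef]
            simp only [Submodule.mem_comap, LinearEquiv.coe_coe, LinearEquiv.apply_symm_apply,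
              Submodule.restrictScalars_mem]
            exact LinearMap.mem_range_self (DirectSum.lof (ZMod p)[X] ι Qt i)
              (Submodule.Quotient.mk 1)
          rw [h, Submodule.mem_bot] at hmem
          apply hzi
          have := congrArg ψ hmem
          rw [LinearEquiv.apply_symm_apply, map_zero] at this
          have := congrArg (DirectSum.component (ZMod p)[X] ι Qt i) this
          rwa [DirectSum.component.lof_self, map_zero] at this
      have hfr : ∀ i, Module.finrank (ZMod p) (Qt i) = (q i ^ e i).natDegree :=
        fun i => aux_finrank_quot (ZMod p) _ (pow_ne_zero _ (hq i).ne_zero)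
      haveI : Module.Finite (ZMod p) (⨁ i, Qt i) := Module.Finite.equiv ψ
      haveI : ∀ i, Module.Finite (ZMod p) (Qt i) := by
        intro i
        have hsurj : Function.Surjective
            ((DirectSum.component (ZMod p)[X] ι Qt i).restrictScalars (ZMod p)) := by
          intro y
          exact ⟨DirectSum.lof (ZMod p)[X] ι Qt i y, DirectSum.component.lof_self _ _ _⟩
        exact Module.Finite.of_surjective _ hsurj
      have hsum : Module.finrank (ZMod p) M = ∑ i, Module.finrank (ZMod p) (Qt i) := by
        rw [ψ.finrank_eq]
        exact Module.finrank_directSum (R := ZMod p) Qt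
      by_cases hex : ∃ i, e i ≠ 0
      · obtain ⟨i₀, hi₀⟩ := hex
        have hz : ∀ j ∈ Finset.univ, j ≠ i₀ → Module.finrank (ZMod p) (Qt j) = 0 := by
          intro j _ hj
          have hej : e j = 0 := by
            by_contra hej
            exact hj (hone j i₀ hej hi₀)
          have h6 : (q j ^ e j).natDegree = 0 := by
            rw [hej, pow_zero, Polynomial.natDegree_one]
          exact (hfr j).trans h6
        rw [hsum, Finset.sum_eq_single i₀ hz (fun h => absurd (Finset.mem_univ i₀) h)]
        have h7 := Polynomial.natDegree_le_of_dvd (hdvd i₀) hXp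
        rw [hfr i₀]
        omega
      · push_neg at hex
        rw [hsum, Finset.sum_eq_zero]
        · exact Nat.zero_le p
        · intro i _
          have h6 : (q i ^ e i).natDegree = 0 := by
            rw [hex i, pow_zero, Polynomial.natDegree_one]
          exact (hfr i).trans h6
    right
    omega
end

section
/- Let p be an odd prime. Let A and B be orthogonal linear maps of the Euclidean space ℝ^4, each of determinant 1, such that A^p = 1, A ≠ 1, B A B^{-1} = A^{-1}, and the fixed subspace W = ker(A − 1) = {v ∈ ℝ^4 : A v = v} has dimension 2. Then B maps W to itself, and the restriction of B to W has determinant −1 (i.e., B reverses orientation on the plane fixed by A). -/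
open Matrix

/-- Determinant splits over invariant complementary subspaces. -/
lemma aux_det_split {E : Type*} [AddCommGroup E] [Module ℝ E] [FiniteDimensional ℝ E]
    {W U : Submodule ℝ E} (hc : IsCompl W U) (g : E →ₗ[ℝ] E)
    (hW : ∀ x ∈ W, g x ∈ W) (hU : ∀ x ∈ U, g x ∈ U) :
    LinearMap.det g =
      LinearMap.det (g.restrict hW) * LinearMap.det (g.restrict hU) := by
  classical
  let e := Submodule.prodEquivOfIsCompl W U hc
  have key : ∀ z : W × U,
      e (((g.restrict hW).prodMap (g.restrict hU)) z) = g (e z) := by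
    rintro ⟨w, u⟩
    simp only [LinearMap.prodMap_apply, Submodule.coe_prodEquivOfIsCompl',
      LinearMap.restrict_coe_apply, e]
    rw [← map_add]
  have hg : g = (e : (W × U) →ₗ[ℝ] E) ∘ₗ
      ((g.restrict hW).prodMap (g.restrict hU)) ∘ₗ (e.symm : E →ₗ[ℝ] (W × U)) := by
    refine LinearMap.ext fun x => ?_
    have := key (e.symm x)
    simp only [LinearEquiv.apply_symm_apply] at this
    simpa using this.symm
  conv_lhs => rw [hg]
  rw [LinearMap.det_conj]
  let bW := Module.finBasis ℝ W
  let bU := Module.finBasis ℝ U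
  rw [← LinearMap.det_toMatrix (bW.prod bU), LinearMap.toMatrix_prodMap,
    Matrix.det_fromBlocks_zero₂₁, LinearMap.det_toMatrix, LinearMap.det_toMatrix]

/-- An inner-product-preserving endomorphism restricted to an invariant subspace has
determinant `±1`. -/
lemma aux_det_sq_eq_one {n : ℕ} (Bm : Matrix (Fin n) (Fin n) ℝ)
    (hpres : ∀ x y : Fin n → ℝ, Bm.mulVec x ⬝ᵥ Bm.mulVec y = x ⬝ᵥ y)
    (W : Submodule ℝ (Fin n → ℝ))
    (h : ∀ x ∈ W, Matrix.toLin' Bm x ∈ W) :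
    LinearMap.det ((Matrix.toLin' Bm).restrict h) ^ 2 = 1 := by
  classical
  set k := Module.finrank ℝ W with hk
  let b : Module.Basis (Fin k) ℝ W := Module.finBasis ℝ W
  set g := (Matrix.toLin' Bm).restrict h with hgdef
  set C := LinearMap.toMatrix b b g with hC
  set P : Matrix (Fin n) (Fin k) ℝ := Matrix.of (fun r i => (b i : Fin n → ℝ) r) with hP
  have hBP : Bm * P = P * C := by
    ext r j
    have hgbj : ((g (b j) : W) : Fin n → ℝ) = Bm.mulVec (b j) := by
      simp [hgdef, LinearMap.restrict_coe_apply, Matrix.toLin'_apply]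
    have hsum : (g (b j) : W) = ∑ i, C i j • b i := by
      conv_lhs => rw [← b.sum_repr (g (b j))]
      refine Finset.sum_congr rfl fun i _ => ?_
      rw [hC, LinearMap.toMatrix_apply]
    have hcoe : ((g (b j) : W) : Fin n → ℝ) = ∑ i, C i j • (b i : Fin n → ℝ) := by
      rw [hsum]; push_cast; rfl
    calc (Bm * P) r j = Bm.mulVec (b j) r := by
          simp [Matrix.mul_apply, Matrix.mulVec, dotProduct, hP]
      _ = (∑ i, C i j • (b i : Fin n → ℝ)) r := by rw [← hcoe, hgbj]
      _ = (P * C) r j := by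
          simp [Matrix.mul_apply, hP, Finset.sum_apply, mul_comm]
  have h1 : ∀ (Q : Matrix (Fin n) (Fin k) ℝ), (Bm * Q)ᵀ * (Bm * Q) = Qᵀ * Q := by
    intro Q
    ext i j
    have := hpres (fun s => Q s i) (fun s => Q s j)
    simpa [Matrix.mul_apply, Matrix.transpose_apply, Matrix.mulVec, dotProduct,
      Finset.mul_sum, Finset.sum_mul, mul_comm, mul_left_comm] using this
  have h2 : Cᵀ * (Pᵀ * P) * C = Pᵀ * P := by
    have h2' := h1 P
    rw [hBP, Matrix.transpose_mul P C] at h2'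
    calc Cᵀ * (Pᵀ * P) * C = Cᵀ * Pᵀ * (P * C) := by simp only [Matrix.mul_assoc]
      _ = Pᵀ * P := h2'
  have hGdet : (Pᵀ * P).det ≠ 0 := by
    intro h0
    obtain ⟨v, hv, hG⟩ := (Matrix.exists_mulVec_eq_zero_iff).2 h0
    have hPv : P.mulVec v = 0 := by
      have h3 : P.mulVec v ⬝ᵥ P.mulVec v = 0 := by
        rw [Matrix.dotProduct_mulVec, ← Matrix.mulVec_transpose, Matrix.mulVec_mulVec, hG,
          zero_dotProduct]
      exact dotProduct_self_eq_zero.mp h3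
    have hsum0 : ∑ i, v i • b i = (0 : W) := by
      have hcoe : ((∑ i, v i • b i : W) : Fin n → ℝ) = P.mulVec v := by
        push_cast
        ext r
        simp [Matrix.mulVec, dotProduct, hP, Finset.sum_apply, mul_comm]
      apply Subtype.ext
      rw [hcoe, hPv]; rfl
    have := Fintype.linearIndependent_iff.mp b.linearIndependent v hsum0
    exact hv (funext fun i => this i)
  have hdetC := congrArg Matrix.det h2
  rw [Matrix.det_mul, Matrix.det_mul, Matrix.det_transpose] at hdetC
  rw [← LinearMap.det_toMatrix b g, ← hC]
  have h4 : C.det ^ 2 * (Pᵀ * P).det = 1 * (Pᵀ * P).det := by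
    rw [one_mul]; nlinarith [hdetC]
  exact mul_right_cancel₀ hGdet h4

/-- The key `2 × 2` computation: a matrix conjugating a nontrivial "rotation" of odd order to
its inverse has negative determinant. -/
lemma aux_det_neg {p : ℕ} (hp : 2 ≤ p) (hodd : Odd p)
    (R M : Matrix (Fin 2) (Fin 2) ℝ)
    (hRp : R ^ p = 1)
    (hfix : ∀ v : Fin 2 → ℝ, R.mulVec v = v → v = 0)
    (hMR : M * R = R ^ (p - 1) * M)
    (hMdet : M.det ≠ 0) :
    M.det < 0 := by
  have hdetR : R.det = 1 := by
    have h1 : R.det ^ p = 1 ^ p := by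
      rw [← Matrix.det_pow, hRp, Matrix.det_one, one_pow]
    exact hodd.strictMono_pow.injective h1
  have hCH : R * R + R.det • (1 : Matrix (Fin 2) (Fin 2) ℝ) = R.trace • R := by
    ext i j
    fin_cases i <;> fin_cases j <;>
      simp [Matrix.mul_apply, Fin.sum_univ_two, Matrix.trace_fin_two, Matrix.det_fin_two,
        Matrix.one_apply] <;> ring
  have h2 : R * (R.trace • (1 : Matrix (Fin 2) (Fin 2) ℝ) - R) = 1 := by
    rw [mul_sub, mul_smul_comm, mul_one, ← hCH, hdetR, one_smul]
    abel
  have h3 : R * R ^ (p - 1) = 1 := by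
    have hpeq : p - 1 + 1 = p := by omega
    calc R * R ^ (p - 1) = R ^ (p - 1 + 1) := (pow_succ' R (p - 1)).symm
      _ = 1 := by rw [hpeq, hRp]
  have hpinv : R ^ (p - 1) = R.trace • (1 : Matrix (Fin 2) (Fin 2) ℝ) - R :=
    (Matrix.inv_eq_right_inv h3).symm.trans (Matrix.inv_eq_right_inv h2)
  have hrel : M * R + R * M = R.trace • M := by
    rw [hMR, hpinv, sub_mul, Matrix.smul_mul, one_mul]
    abel
  have hdisc : R.trace ^ 2 < 4 := by
    by_contra hge
    push_neg at hge
    set t := R.trace with ht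
    have hs : Real.sqrt (t ^ 2 - 4) ^ 2 = t ^ 2 - 4 := Real.sq_sqrt (by linarith)
    set lam := (t + Real.sqrt (t ^ 2 - 4)) / 2 with hlam
    have hquad : lam ^ 2 - t * lam + 1 = 0 := by
      rw [hlam]; field_simp; linarith [hs]
    have hsing : (R - lam • 1).det = 0 := by
      have hdR := hdetR
      rw [Matrix.det_fin_two] at hdR
      have htr : t = R 0 0 + R 1 1 := by rw [ht, Matrix.trace_fin_two]
      rw [Matrix.det_fin_two]
      simp only [Matrix.sub_apply, Matrix.smul_apply, Matrix.one_apply, smul_eq_mul]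
      norm_num
      linear_combination hdR + hquad + lam * htr
    obtain ⟨v, hv0, hveq⟩ := (Matrix.exists_mulVec_eq_zero_iff).mpr hsing
    have hRv : R.mulVec v = lam • v := by
      rw [Matrix.sub_mulVec, Matrix.smul_mulVec, Matrix.one_mulVec, sub_eq_zero] at hveq
      exact hveq
    have hpow : ∀ m, (R ^ m).mulVec v = lam ^ m • v := by
      intro m
      induction m with
      | zero => simp
      | succ k ih =>
          rw [pow_succ, ← Matrix.mulVec_mulVec, hRv, Matrix.mulVec_smul, ih, smul_smul,
            pow_succ, mul_comm]
    have hlam1 : lam ^ p = 1 := by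
      have h5 : lam ^ p • v = v := by rw [← hpow, hRp, Matrix.one_mulVec]
      obtain ⟨i, hi⟩ := Function.ne_iff.mp hv0
      have h6 := congr_fun h5 i
      simp only [Pi.smul_apply, smul_eq_mul] at h6
      have hvi : v i ≠ 0 := hi
      have h7 : lam ^ p * v i = 1 * v i := by rw [one_mul]; exact h6
      exact mul_right_cancel₀ hvi h7
    have hlameq : lam = 1 := hodd.strictMono_pow.injective (by rw [hlam1, one_pow])
    exact hv0 (hfix v (by rw [hRv, hlameq, one_smul]))
  -- now pass to entries
  have he : ∀ i j, (M * R) i j + (R * M) i j = R.trace * M i j := by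
    intro i j
    rw [← Matrix.add_apply, hrel, Matrix.smul_apply, smul_eq_mul]
  have he00 := he 0 0
  have he01 := he 0 1
  have he10 := he 1 0
  have he11 := he 1 1
  simp only [Matrix.mul_apply, Fin.sum_univ_two, Matrix.trace_fin_two] at he00 he01 he10 he11
  have hdR : R 0 0 * R 1 1 - R 0 1 * R 1 0 = 1 := by
    rw [← Matrix.det_fin_two]; exact hdetR
  rw [Matrix.trace_fin_two] at hdisc
  rw [Matrix.det_fin_two] at hMdet ⊢
  set a := R 0 0; set b := R 0 1; set c := R 1 0; set d := R 1 1
  set x := M 0 0; set y := M 0 1; set z := M 1 0; set w := M 1 1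
  -- b * c < 0
  have hbc : b * c < 0 := by nlinarith [sq_nonneg (a - d)]
  have hb : b ≠ 0 := by
    intro hb0
    rw [hb0] at hbc
    simp at hbc
  have hxw : x + w = 0 := by
    have : b * (x + w) = 0 := by linarith [he01]
    rcases mul_eq_zero.mp this with h | h
    · exact absurd h hb
    · exact h
  have hweq : w = -x := by linarith
  have hkey : c * y + b * z = (d - a) * x := by linarith [he00]
  have hge : x * x + y * z ≥ 0 := by
    have hsq : (c * y + b * z) ^ 2 = (d - a) ^ 2 * x ^ 2 := by rw [hkey]; ring
    have h4 : 4 * (b * c) * (y * z) ≤ (d - a) ^ 2 * x ^ 2 := by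
      nlinarith [sq_nonneg (c * y - b * z), hsq]
    have h45 : (d - a) ^ 2 + 4 * (b * c) < 0 := by nlinarith [hdisc, hdR]
    have h5 := mul_le_mul_of_nonneg_right (le_of_lt h45) (sq_nonneg x)
    nlinarith [h4, h5, hbc]
  have hne : x * w - y * z ≠ 0 := hMdet
  rw [hweq] at hne ⊢
  cases' lt_or_eq_of_le hge with h h
  · nlinarith
  · exfalso; apply hne; linarith

lemma aux_geom_left {α : Type*} [Ring α] (X : α) {p : ℕ} (hX : X ^ p = 1) :
    X * (∑ i ∈ Finset.range p, X ^ i) = ∑ i ∈ Finset.range p, X ^ i := by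
  rw [Finset.mul_sum]
  have h1 : ∑ i ∈ Finset.range p, X * X ^ i = ∑ i ∈ Finset.range p, X ^ (i + 1) :=
    Finset.sum_congr rfl fun i _ => (pow_succ' X i).symm
  rw [h1]
  have h4 := (Finset.sum_range_succ' (fun i => X ^ i) p).symm.trans
    (Finset.sum_range_succ (fun i => X ^ i) p)
  rw [hX, pow_zero] at h4
  exact add_right_cancel h4

lemma aux_geom_right {α : Type*} [Ring α] (X : α) {p : ℕ} (hX : X ^ p = 1) :
    (∑ i ∈ Finset.range p, X ^ i) * X = ∑ i ∈ Finset.range p, X ^ i := by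
  rw [Finset.sum_mul]
  have h1 : ∑ i ∈ Finset.range p, X ^ i * X = ∑ i ∈ Finset.range p, X ^ (i + 1) :=
    Finset.sum_congr rfl fun i _ => (pow_succ X i).symm
  rw [h1]
  have h4 := (Finset.sum_range_succ' (fun i => X ^ i) p).symm.trans
    (Finset.sum_range_succ (fun i => X ^ i) p)
  rw [hX, pow_zero] at h4
  exact add_right_cancel h4

lemma aux_geom_left_pow {α : Type*} [Ring α] (X : α) {p : ℕ} (hX : X ^ p = 1) (m : ℕ) :
    X ^ m * (∑ i ∈ Finset.range p, X ^ i) = ∑ i ∈ Finset.range p, X ^ i := by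
  induction m with
  | zero => simp
  | succ k ih => rw [pow_succ, mul_assoc, aux_geom_left X hX, ih]

lemma aux_geom_right_pow {α : Type*} [Ring α] (X : α) {p : ℕ} (hX : X ^ p = 1) (m : ℕ) :
    (∑ i ∈ Finset.range p, X ^ i) * X ^ m = ∑ i ∈ Finset.range p, X ^ i := by
  induction m with
  | zero => simp
  | succ k ih => rw [pow_succ, ← mul_assoc, ih, aux_geom_right X hX]

/-- Let `p` be an odd prime and let `A`, `B` be orthogonal `4 × 4` real
matrices of determinant `1` with `A ^ p = 1`, `A ≠ 1`, `B * A * B⁻¹ = A⁻¹`, and such that the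
fixed plane `W = ker (A - 1)` is two-dimensional. Then `B` maps `W` to itself and the
restriction of `B` to `W` has determinant `-1`. -/
theorem stmt_11 (p : ℕ) (hp : p.Prime) (hodd : Odd p)
    (A B : Matrix (Fin 4) (Fin 4) ℝ)
    (hAorth : A ∈ Matrix.orthogonalGroup (Fin 4) ℝ)
    (hBorth : B ∈ Matrix.orthogonalGroup (Fin 4) ℝ)
    (hAdet : A.det = 1) (hBdet : B.det = 1)
    (hAp : A ^ p = 1) (hA1 : A ≠ 1)
    (hBA : B * A * B⁻¹ = A⁻¹)
    (W : Submodule ℝ (Fin 4 → ℝ))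
    (hW : W = LinearMap.ker (Matrix.toLin' (A - 1)))
    (hdim : Module.finrank ℝ W = 2) :
    ∃ h : ∀ x ∈ W, Matrix.toLin' B x ∈ W,
      LinearMap.det ((Matrix.toLin' B).restrict h) = -1 := by
  classical
  have hp2 : 2 ≤ p := hp.two_le
  have hpR : (p : ℝ) ≠ 0 := Nat.cast_ne_zero.mpr hp.pos.ne'
  have hBdet' : IsUnit B.det := by rw [hBdet]; exact isUnit_one
  have hBiB : B⁻¹ * B = 1 := Matrix.nonsing_inv_mul B hBdet'
  set Cm := A ^ (p - 1) with hCm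
  have hpeq : p - 1 + 1 = p := by omega
  have hApm : A * Cm = 1 := by
    rw [hCm, ← pow_succ', hpeq, hAp]
  have hAinv : A⁻¹ = Cm := Matrix.inv_eq_right_inv hApm
  have hBA1 : B * A = Cm * B := by
    calc B * A = B * A * (B⁻¹ * B) := by rw [hBiB, Matrix.mul_one]
      _ = B * A * B⁻¹ * B := by rw [Matrix.mul_assoc (B * A)]
      _ = A⁻¹ * B := by rw [hBA]
      _ = Cm * B := by rw [hAinv]
  have hAB : A * B = B * Cm := by
    calc A * B = A * B * (A * Cm) := by rw [hApm, Matrix.mul_one]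
      _ = (A * (B * A)) * Cm := by simp only [Matrix.mul_assoc]
      _ = (A * (Cm * B)) * Cm := by rw [hBA1]
      _ = (A * Cm) * (B * Cm) := by simp only [Matrix.mul_assoc]
      _ = B * Cm := by rw [hApm, Matrix.one_mul]
  have hWmem : ∀ x, x ∈ W ↔ A.mulVec x = x := by
    intro x
    rw [hW, LinearMap.mem_ker, Matrix.toLin'_apply, Matrix.sub_mulVec, Matrix.one_mulVec,
      sub_eq_zero]
  have hAn_fix : ∀ (m : ℕ) (x : Fin 4 → ℝ), x ∈ W → (A ^ m).mulVec x = x := by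
    intro m x hx
    induction m with
    | zero => simp
    | succ k ih => rw [pow_succ, ← Matrix.mulVec_mulVec, (hWmem x).mp hx, ih]
  have hgW : ∀ x ∈ W, Matrix.toLin' B x ∈ W := by
    intro x hx
    rw [hWmem, Matrix.toLin'_apply, Matrix.mulVec_mulVec, hAB, ← Matrix.mulVec_mulVec,
      hCm, hAn_fix _ x hx]
  -- the averaging projection
  set S := ∑ i ∈ Finset.range p, A ^ i with hS
  set T := ∑ i ∈ Finset.range p, Cm ^ i with hT
  have hCp : Cm ^ p = 1 := by rw [hCm, ← pow_mul, mul_comm, pow_mul, hAp, one_pow]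
  have hAS : A * S = S := aux_geom_left A hAp
  have hSA : S * A = S := aux_geom_right A hAp
  have hSAm : ∀ m, S * A ^ m = S := fun m => aux_geom_right_pow A hAp m
  have hA_eq_Cpow : Cm ^ (p - 1) = A := by
    rw [hCm, ← pow_mul]
    obtain ⟨r, hr⟩ : ∃ r, p = r + 2 := ⟨p - 2, by omega⟩
    have e1 : p - 1 = r + 1 := by omega
    have hexp : (p - 1) * (p - 1) = r * p + 1 := by
      rw [e1, hr]; ring
    rw [hexp, pow_add, mul_comm r p, pow_mul, hAp, one_pow, pow_one, Matrix.one_mul]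
  have hAT : A * T = T := by
    rw [← hA_eq_Cpow, hT]
    exact aux_geom_left_pow Cm hCp (p - 1)
  have hAmT : ∀ m, A ^ m * T = T := by
    intro m
    induction m with
    | zero => simp
    | succ k ih => rw [pow_succ, Matrix.mul_assoc, hAT, ih]
  have hST_T : S * T = (p : ℕ) • T := by
    rw [hS, Finset.sum_mul]
    rw [Finset.sum_congr rfl (fun i _ => hAmT i), Finset.sum_const, Finset.card_range]
  have hST_S : S * T = (p : ℕ) • S := by
    rw [hT, Finset.mul_sum]
    have h1 : ∀ i ∈ Finset.range p, S * Cm ^ i = S := by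
      intro i _
      rw [hCm, ← pow_mul]
      exact hSAm _
    rw [Finset.sum_congr rfl h1, Finset.sum_const, Finset.card_range]
  have hSeqT : S = T := by
    have h1 : (p : ℝ) • S = (p : ℝ) • T := by
      rw [Nat.cast_smul_eq_nsmul, Nat.cast_smul_eq_nsmul, ← hST_S, ← hST_T]
    exact smul_right_injective _ hpR h1
  have hBS : B * S = S * B := by
    have h1 : ∀ i : ℕ, B * A ^ i = Cm ^ i * B := by
      intro i
      induction i with
      | zero => simp
      | succ k ih =>
          calc B * A ^ (k + 1) = (B * A ^ k) * A := by rw [pow_succ, Matrix.mul_assoc]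
            _ = Cm ^ k * (B * A) := by rw [ih, Matrix.mul_assoc]
            _ = Cm ^ k * Cm * B := by rw [hBA1, Matrix.mul_assoc]
            _ = Cm ^ (k + 1) * B := by rw [pow_succ]
    calc B * S = ∑ i ∈ Finset.range p, B * A ^ i := by rw [hS, Finset.mul_sum]
      _ = ∑ i ∈ Finset.range p, Cm ^ i * B := Finset.sum_congr rfl fun i _ => h1 i
      _ = T * B := by rw [hT, Finset.sum_mul]
      _ = S * B := by rw [hSeqT]
  set Pm := (p : ℝ)⁻¹ • S with hPm
  have hAPm : A * Pm = Pm := by rw [hPm, Matrix.mul_smul, hAS]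
  have hPmA : Pm * A = Pm := by rw [hPm, Matrix.smul_mul, hSA]
  have hBPm : B * Pm = Pm * B := by rw [hPm, Matrix.mul_smul, Matrix.smul_mul, hBS]
  have hproj : LinearMap.IsProj W (Matrix.toLin' Pm) := by
    constructor
    · intro x
      rw [hWmem, Matrix.toLin'_apply, Matrix.mulVec_mulVec, hAPm]
    · intro x hx
      have h1 : Matrix.toLin' Pm x = (p : ℝ)⁻¹ • Matrix.toLin' S x := by
        rw [hPm, Matrix.toLin'_apply, Matrix.toLin'_apply, Matrix.smul_mulVec]
      have h2 : Matrix.toLin' S x = (p : ℕ) • x := by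
        have h3 : Matrix.toLin' S = ∑ i ∈ Finset.range p, Matrix.toLin' (A ^ i) := by
          rw [hS]; exact map_sum Matrix.toLin' _ _
        rw [h3, LinearMap.sum_apply]
        have h4 : ∀ i ∈ Finset.range p, Matrix.toLin' (A ^ i) x = x := fun i _ => by
          rw [Matrix.toLin'_apply, hAn_fix i x hx]
        rw [Finset.sum_congr rfl h4, Finset.sum_const, Finset.card_range]
      rw [h1, h2, ← Nat.cast_smul_eq_nsmul ℝ, smul_smul, inv_mul_cancel₀ hpR, one_smul]
  set U := LinearMap.ker (Matrix.toLin' Pm) with hU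
  have hcompl : IsCompl W U := hproj.isCompl
  have hfU : ∀ x ∈ U, Matrix.toLin' A x ∈ U := by
    intro x hx
    rw [hU, LinearMap.mem_ker] at hx ⊢
    rw [Matrix.toLin'_apply, Matrix.toLin'_apply, Matrix.mulVec_mulVec, hPmA,
      ← Matrix.toLin'_apply]
    exact hx
  have hgU : ∀ x ∈ U, Matrix.toLin' B x ∈ U := by
    intro x hx
    rw [hU, LinearMap.mem_ker] at hx ⊢
    rw [Matrix.toLin'_apply] at hx
    rw [Matrix.toLin'_apply, Matrix.toLin'_apply, Matrix.mulVec_mulVec, ← hBPm,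
      ← Matrix.mulVec_mulVec, hx, Matrix.mulVec_zero]
  have hdimU : Module.finrank ℝ U = 2 := by
    have h1 := Submodule.finrank_add_eq_of_isCompl hcompl
    rw [hdim, Module.finrank_fin_fun] at h1
    omega
  -- determinant bookkeeping
  set fU := (Matrix.toLin' A).restrict hfU with hfUdef
  set gU := (Matrix.toLin' B).restrict hgU with hgUdef
  have hsplit := aux_det_split hcompl (Matrix.toLin' B) hgW hgU
  have hdetg : LinearMap.det (Matrix.toLin' B) = 1 := by
    rw [LinearMap.det_toLin', hBdet]
  have hprod : LinearMap.det ((Matrix.toLin' B).restrict hgW) * LinearMap.det gU = 1 := by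
    rw [hgUdef, ← hsplit, hdetg]
  -- orthogonality : dot products preserved
  have hpres : ∀ x y : Fin 4 → ℝ, B.mulVec x ⬝ᵥ B.mulVec y = x ⬝ᵥ y := by
    intro x y
    have horth : Bᵀ * B = 1 := by
      have h1 := (Matrix.mem_orthogonalGroup_iff' (Fin 4) ℝ).mp hBorth
      exact h1
    calc B.mulVec x ⬝ᵥ B.mulVec y = (B.mulVec x ᵥ* B) ⬝ᵥ y := Matrix.dotProduct_mulVec _ _ _
      _ = ((Bᵀ * B).mulVec x) ⬝ᵥ y := by
          rw [← Matrix.mulVec_transpose, Matrix.mulVec_mulVec]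
      _ = x ⬝ᵥ y := by rw [horth, Matrix.one_mulVec]
  have hdW2 : LinearMap.det ((Matrix.toLin' B).restrict hgW) ^ 2 = 1 :=
    aux_det_sq_eq_one B hpres W hgW
  -- the 2 × 2 matrices on U
  let bU : Module.Basis (Fin 2) ℝ U := Module.finBasisOfFinrankEq ℝ U hdimU
  set R := LinearMap.toMatrix bU bU fU with hR
  set M := LinearMap.toMatrix bU bU gU with hM
  have htmul : ∀ f g : U →ₗ[ℝ] U, LinearMap.toMatrix bU bU (f ∘ₗ g) =
      LinearMap.toMatrix bU bU f * LinearMap.toMatrix bU bU g :=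
    fun f g => LinearMap.toMatrix_comp bU bU bU f g
  have htpow : ∀ (f : U →ₗ[ℝ] U) (m : ℕ),
      LinearMap.toMatrix bU bU (f ^ m) = (LinearMap.toMatrix bU bU f) ^ m := by
    intro f m
    induction m with
    | zero =>
        rw [pow_zero, pow_zero]
        exact LinearMap.toMatrix_id bU
    | succ k ih =>
        rw [pow_succ, pow_succ, Module.End.mul_eq_comp, htmul, ih]
  have hrespow : ∀ (m : ℕ) (x : U), ((fU ^ m) x : Fin 4 → ℝ) = (A ^ m).mulVec x := by
    intro m
    induction m with
    | zero => intro x; simp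
    | succ k ih =>
        intro x
        have h1 : (fU ^ (k + 1)) x = (fU ^ k) (fU x) := by
          rw [pow_succ, Module.End.mul_apply]
        have h2 : (fU x : Fin 4 → ℝ) = A.mulVec x := by
          rw [hfUdef, LinearMap.restrict_coe_apply, Matrix.toLin'_apply]
        rw [h1, ih (fU x), h2, Matrix.mulVec_mulVec, ← pow_succ]
  have hfUp : fU ^ p = 1 := by
    apply LinearMap.ext
    intro x
    apply Subtype.ext
    rw [hrespow p x, hAp, Matrix.one_mulVec]
    rfl
  have hRp : R ^ p = 1 := by
    rw [hR, ← htpow, hfUp]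
    exact LinearMap.toMatrix_id bU
  have hMR : M * R = R ^ (p - 1) * M := by
    have hcomp : gU ∘ₗ fU = (fU ^ (p - 1)) ∘ₗ gU := by
      apply LinearMap.ext
      intro x
      apply Subtype.ext
      have h1 : ((gU ∘ₗ fU) x : Fin 4 → ℝ) = B.mulVec (A.mulVec x) := by
        rw [LinearMap.comp_apply, hgUdef, LinearMap.restrict_coe_apply, Matrix.toLin'_apply,
          hfUdef, LinearMap.restrict_coe_apply, Matrix.toLin'_apply]
      have h2 : (((fU ^ (p - 1)) ∘ₗ gU) x : Fin 4 → ℝ) = (A ^ (p - 1)).mulVec (B.mulVec x) := by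
        rw [LinearMap.comp_apply, hrespow, hgUdef, LinearMap.restrict_coe_apply,
          Matrix.toLin'_apply]
      rw [h1, h2, Matrix.mulVec_mulVec, Matrix.mulVec_mulVec, hBA1, hCm]
    rw [hM, hR, ← htmul, ← htpow, ← htmul, hcomp]
  have hfix : ∀ v : Fin 2 → ℝ, R.mulVec v = v → v = 0 := by
    intro v hv
    set x : U := bU.equivFun.symm v with hx
    have hrepr : ⇑(bU.repr x) = v := by
      funext i
      rw [← Module.Basis.equivFun_apply, hx, LinearEquiv.apply_symm_apply]
    have h1 : R.mulVec (⇑(bU.repr x)) = ⇑(bU.repr (fU x)) :=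
      LinearMap.toMatrix_mulVec_repr bU bU fU x
    have h2 : fU x = x := by
      have h7 : ⇑(bU.repr (fU x)) = ⇑(bU.repr x) := by rw [← h1, hrepr, hv]
      exact bU.repr.injective (DFunLike.coe_injective h7)
    have h3 : (x : Fin 4 → ℝ) ∈ W := by
      rw [hWmem]
      have h4 := congrArg Subtype.val h2
      rw [hfUdef, LinearMap.restrict_coe_apply, Matrix.toLin'_apply] at h4
      exact h4
    have h4 : (x : Fin 4 → ℝ) ∈ W ⊓ U := ⟨h3, x.2⟩
    rw [hcompl.inf_eq_bot] at h4
    have h5 : x = 0 := Subtype.ext (by simpa using h4)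
    have h6 : v = bU.equivFun x := by rw [hx, LinearEquiv.apply_symm_apply]
    rw [h6, h5, map_zero]
  have hdetMU : M.det = LinearMap.det gU := by rw [hM]; exact LinearMap.det_toMatrix bU gU
  have hMdetne : M.det ≠ 0 := by
    rw [hdetMU]
    intro h0
    rw [h0, mul_zero] at hprod
    exact zero_ne_one hprod
  have hMneg : M.det < 0 := aux_det_neg hp2 hodd R M hRp hfix hMR hMdetne
  refine ⟨hgW, ?_⟩
  have hdUneg : LinearMap.det gU < 0 := by rw [← hdetMU]; exact hMneg
  have hdWval : LinearMap.det ((Matrix.toLin' B).restrict hgW) *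
      LinearMap.det ((Matrix.toLin' B).restrict hgW) = 1 := by
    rw [← sq]; exact hdW2
  rcases mul_self_eq_one_iff.mp hdWval with h | h
  · exfalso
    rw [h, one_mul] at hprod
    rw [hprod] at hdUneg
    linarith
  · exact h
end
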